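/- arXiv:1510.08736 — 2 statements merged into one kernel-verified Lean document; each statement's English description precedes it below -/
import Mathlib

section
/- Let g : ℝ^{NM} → ℝ be differentiable with (∇g(x)−∇g(y))ᵀ(x−y) ≥ m‖x−y‖₂², let W be a positive definite diagonal matrix with smallest diagonal entry d_min > 0, and suppose x and x' satisfy ∇g(x) + 2ρWx + s = ∇g(x') + 2ρWx' where ‖s‖₂ ≤ S. Then ‖x − x'‖₂ ≤ S/(m + 2ρ d_min). -/
/-!
The map `y ↦ ∇g(y) + 2ρWy` is strongly monotone with constant `m + 2ρ d_min`, being the sum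
of an `m`-strongly monotone map and `2ρ` times a diagonal map with entries at least `d_min`.
For a `c`-strongly monotone `F`, the equation `F x + s = F x'` gives
`c‖x - x'‖² ≤ ⟪-s, x - x'⟫ ≤ ‖s‖ ‖x - x'‖`.
-/

open scoped RealInnerProductSpace

def StronglyMonotoneWith {E : Type*} [NormedAddCommGroup E] [InnerProductSpace ℝ E]
    (c : ℝ) (F : E → E) : Prop :=
  ∀ x y, c * ‖x - y‖ ^ 2 ≤ ⟪F x - F y, x - y⟫

namespace StronglyMonotoneWith

variable {E : Type*} [NormedAddCommGroup E] [InnerProductSpace ℝ E] {F G : E → E} {a b c : ℝ}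

theorem add_smul {r : ℝ} (hr : 0 ≤ r) (hF : StronglyMonotoneWith a F)
    (hG : StronglyMonotoneWith b G) :
    StronglyMonotoneWith (a + r * b) fun x => F x + r • G x := by
  intro x y
  have hsplit : F x + r • G x - (F y + r • G y) = (F x - F y) + r • (G x - G y) := by
    module
  rw [hsplit, inner_add_left, real_inner_smul_left]
  nlinarith [hF x y, mul_le_mul_of_nonneg_left (hG x y) hr]

theorem norm_sub_le_of_add_eq (hF : StronglyMonotoneWith c F) (hc : 0 < c) {x x' s : E}
    (heq : F x + s = F x') : ‖x - x'‖ ≤ ‖s‖ / c := by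
  have hdiff : F x - F x' = -s := by rw [← heq]; abel
  have hmul : c * ‖x - x'‖ * ‖x - x'‖ ≤ ‖s‖ * ‖x - x'‖ :=
    calc c * ‖x - x'‖ * ‖x - x'‖ = c * ‖x - x'‖ ^ 2 := by ring
      _ ≤ ⟪-s, x - x'⟫ := hdiff ▸ hF x x'
      _ ≤ ‖-s‖ * ‖x - x'‖ := real_inner_le_norm _ _
      _ = ‖s‖ * ‖x - x'‖ := by rw [norm_neg]
  rw [le_div_iff₀ hc, mul_comm]
  rcases (norm_nonneg (x - x')).eq_or_lt with h0 | hpos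
  · rw [← h0, mul_zero]
    exact norm_nonneg s
  · exact le_of_mul_le_mul_right hmul hpos

end StronglyMonotoneWith

theorem stronglyMonotoneWith_diagonal {ι : Type*} [Fintype ι] {d : ι → ℝ} {dmin : ℝ}
    (hd : ∀ i, dmin ≤ d i) :
    StronglyMonotoneWith dmin
      fun y : EuclideanSpace ℝ ι => (WithLp.equiv 2 (ι → ℝ)).symm fun i => d i * y i := by
  intro x y
  rw [← real_inner_self_eq_norm_sq, PiLp.inner_apply, PiLp.inner_apply, Finset.mul_sum]
  refine Finset.sum_le_sum fun i _ => ?_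
  simp only [RCLike.inner_apply, conj_trivial, PiLp.sub_apply, WithLp.equiv_symm_apply]
  nlinarith [mul_le_mul_of_nonneg_right (hd i) (mul_self_nonneg (x i - y i))]

theorem stmt_13_general {n : ℕ} (ρ m dmin S : ℝ) (hρ : 0 < ρ) (hm : 0 < m) (hdmin : 0 < dmin)
    (Dg : EuclideanSpace ℝ (Fin n) → EuclideanSpace ℝ (Fin n))
    (hsc : ∀ x y, m * ‖x - y‖ ^ 2 ≤ ⟪Dg x - Dg y, x - y⟫)
    (d : Fin n → ℝ) (hd : ∀ i, dmin ≤ d i)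
    (x x' s : EuclideanSpace ℝ (Fin n)) (hS : ‖s‖ ≤ S)
    (heq : Dg x + (2 * ρ) • ((WithLp.equiv 2 (Fin n → ℝ)).symm fun i => d i * x i) + s =
      Dg x' + (2 * ρ) • ((WithLp.equiv 2 (Fin n → ℝ)).symm fun i => d i * x' i)) :
    ‖x - x'‖ ≤ S / (m + 2 * ρ * dmin) := by
  have hF : StronglyMonotoneWith (m + 2 * ρ * dmin) fun y =>
      Dg y + (2 * ρ) • ((WithLp.equiv 2 (Fin n → ℝ)).symm fun i => d i * y i) :=
    StronglyMonotoneWith.add_smul (by positivity) hsc (stronglyMonotoneWith_diagonal hd)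
  have hpos : 0 < m + 2 * ρ * dmin := by positivity
  calc ‖x - x'‖ ≤ ‖s‖ / (m + 2 * ρ * dmin) := hF.norm_sub_le_of_add_eq hpos heq
    _ ≤ S / (m + 2 * ρ * dmin) := by gcongr

/-- Perturbation bound: if `∇g(x) + 2ρWx + s = ∇g(x') + 2ρWx'` with `g` strongly
convex (constant `m`), `W` positive definite diagonal with smallest entry
`d_min`, and `‖s‖ ≤ S`, then `‖x − x'‖ ≤ S/(m + 2ρ d_min)`. -/
theorem stmt_13 {n : ℕ} (ρ m dmin S : ℝ) (hρ : 0 < ρ) (hm : 0 < m) (hdmin : 0 < dmin)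
    (g : EuclideanSpace ℝ (Fin n) → ℝ)
    (Dg : EuclideanSpace ℝ (Fin n) → EuclideanSpace ℝ (Fin n))
    (hgrad : ∀ x, HasGradientAt g (Dg x) x)
    (hsc : ∀ x y, m * ‖x - y‖ ^ 2 ≤ ⟪Dg x - Dg y, x - y⟫)
    (d : Fin n → ℝ) (hd : ∀ i, dmin ≤ d i)
    (x x' s : EuclideanSpace ℝ (Fin n)) (hS : ‖s‖ ≤ S)
    (heq : Dg x + (2 * ρ) • ((WithLp.equiv 2 (Fin n → ℝ)).symm fun i => d i * x i) + s =
      Dg x' + (2 * ρ) • ((WithLp.equiv 2 (Fin n → ℝ)).symm fun i => d i * x' i)) :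
    ‖x - x'‖ ≤ S / (m + 2 * ρ * dmin) :=
  stmt_13_general ρ m dmin S hρ hm hdmin Dg hsc d hd x x' s hS heq
end

section
/- Let Gᵢ(x̃) = gᵢ(x̃) + ρ|𝒩ᵢ| x̃ᵀx̃ − cᵀx̃ with gᵢ convex differentiable, ρ > 0, and suppose x* minimizes Gᵢ(x̃) + αᵀx̃ over a box 𝒳 = {x : a ⪯ x ⪯ b}. If Gᵢ is Lipschitz continuous on 𝒳 with constant K and the l-th component of α satisfies α_l > K, then the l-th component of x* equals a_l; if α_l < −K then x*_l = b_l. -/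
open scoped RealInnerProductSpace

/-! Moving the minimiser `x*` to another feasible point `y` changes the linear term by `⟪α, y - x*⟫`
and `Gᵢ` by at most `K ‖y - x*‖`, so optimality gives `⟪α, x* - y⟫ ≤ K ‖x* - y‖`. Taking for `y` the
point `x*` with its `l`-th coordinate pushed to `a_l` (resp. `b_l`) yields
`(α_l - K) (x*_l - a_l) ≤ 0` (resp. `(α_l + K) (x*_l - b_l) ≤ 0`), which forces `x*_l = a_l` when
`α_l > K` (resp. `x*_l = b_l` when `α_l < -K`). -/

theorem inner_sub_le_of_isMinOn_add_inner {E : Type*} [NormedAddCommGroup E]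
    [InnerProductSpace ℝ E] {f : E → ℝ} {S : Set E} {α x y : E} {K : ℝ}
    (hmin : IsMinOn (fun z => f z + ⟪α, z⟫) S x) (hf : f y - f x ≤ K * ‖x - y‖) (hy : y ∈ S) :
    ⟪α, x - y⟫ ≤ K * ‖x - y‖ := by
  have := isMinOn_iff.1 hmin y hy
  rw [inner_sub_right]
  linarith

namespace EuclideanSpace

variable {ι : Type*} [DecidableEq ι]

theorem apply_add_single_sub_apply (x : EuclideanSpace ℝ ι) (l : ι) (t : ℝ) (i : ι) :
    (x + single l (t - x l)) i = if i = l then t else x i := by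
  by_cases h : i = l
  · subst h; simp
  · simp [h]

theorem sub_add_single_sub_apply (x : EuclideanSpace ℝ ι) (l : ι) (t : ℝ) :
    x - (x + single l (t - x l)) = single l (x l - t) := by
  ext i
  by_cases h : i = l
  · subst h; simp
  · simp [h]

end EuclideanSpace

open EuclideanSpace in
theorem mul_coord_sub_le_of_isMinOn_box {ι : Type*} [Fintype ι] [DecidableEq ι]
    {f : EuclideanSpace ℝ ι → ℝ} {α a b x : EuclideanSpace ℝ ι} {K : ℝ}
    (hmin : IsMinOn (fun z => f z + ⟪α, z⟫) {y | ∀ i, a i ≤ y i ∧ y i ≤ b i} x)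
    (hf : ∀ y, (∀ i, a i ≤ y i ∧ y i ≤ b i) → f y - f x ≤ K * ‖x - y‖)
    (hx : ∀ i, a i ≤ x i ∧ x i ≤ b i) (l : ι) (t : ℝ) (hat : a l ≤ t) (htb : t ≤ b l) :
    α l * (x l - t) ≤ K * |x l - t| := by
  set y := x + single l (t - x l)
  have hy : ∀ i, a i ≤ y i ∧ y i ≤ b i := by
    intro i
    rw [apply_add_single_sub_apply]
    split_ifs with h
    · exact ⟨h ▸ hat, h ▸ htb⟩
    · exact hx i
  have key := inner_sub_le_of_isMinOn_add_inner hmin (hf y hy) hy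
  rwa [sub_add_single_sub_apply, inner_single_right, PiLp.norm_single, Real.norm_eq_abs,
    conj_trivial, mul_comm] at key

theorem eq_zero_of_mul_le_mul_of_lt {β K s : ℝ} (hK : K < β) (hs : 0 ≤ s)
    (h : β * s ≤ K * s) : s = 0 := by
  nlinarith

theorem stmt_17_general {M : ℕ} (ρ : ℝ) (deg : ℕ)
    (g : EuclideanSpace ℝ (Fin M) → ℝ)
    (c α a b : EuclideanSpace ℝ (Fin M)) (hab : ∀ i, a i ≤ b i)
    (K : ℝ)
    (hLip : ∀ x y : EuclideanSpace ℝ (Fin M),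
      (∀ i, a i ≤ x i ∧ x i ≤ b i) → (∀ i, a i ≤ y i ∧ y i ≤ b i) →
      |(g x + ρ * deg * ⟪x, x⟫ - ⟪c, x⟫) - (g y + ρ * deg * ⟪y, y⟫ - ⟪c, y⟫)| ≤
        K * ‖x - y‖)
    (xstar : EuclideanSpace ℝ (Fin M))
    (hxstar : ∀ i, a i ≤ xstar i ∧ xstar i ≤ b i)
    (hmin : ∀ y : EuclideanSpace ℝ (Fin M), (∀ i, a i ≤ y i ∧ y i ≤ b i) →
      (g xstar + ρ * deg * ⟪xstar, xstar⟫ - ⟪c, xstar⟫) + ⟪α, xstar⟫ ≤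
        (g y + ρ * deg * ⟪y, y⟫ - ⟪c, y⟫) + ⟪α, y⟫)
    (l : Fin M) :
    (α l > K → xstar l = a l) ∧ (α l < -K → xstar l = b l) := by
  have hG : ∀ y, (∀ i, a i ≤ y i ∧ y i ≤ b i) →
      (g y + ρ * deg * ⟪y, y⟫ - ⟪c, y⟫) - (g xstar + ρ * deg * ⟪xstar, xstar⟫ - ⟪c, xstar⟫) ≤
        K * ‖xstar - y‖ :=
    fun y hy => (le_abs_self _).trans ((abs_sub_comm _ _).trans_le (hLip xstar y hxstar hy))
  have hcoord := mul_coord_sub_le_of_isMinOn_box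
    (f := fun y => g y + ρ * deg * ⟪y, y⟫ - ⟪c, y⟫) (isMinOn_iff.2 hmin) hG hxstar l
  constructor
  · intro hα
    have hs := sub_nonneg.2 (hxstar l).1
    have h := hcoord _ le_rfl (hab l)
    rw [abs_of_nonneg hs] at h
    exact sub_eq_zero.1 (eq_zero_of_mul_le_mul_of_lt hα hs h)
  · intro hα
    have hs := sub_nonneg.2 (hxstar l).2
    have h := hcoord _ (hab l) le_rfl
    rw [abs_sub_comm, abs_of_nonneg hs] at h
    exact (sub_eq_zero.1 (eq_zero_of_mul_le_mul_of_lt (lt_neg.1 hα) hs (by linarith))).symm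

/-- If the minimizer of `Gᵢ(x) + αᵀx` over a box has `α_l` exceeding the
Lipschitz constant of `Gᵢ` (resp. below its negative), then its `l`-th
coordinate sits at the lower (resp. upper) boundary. -/
theorem stmt_17 {M : ℕ} (ρ : ℝ) (hρ : 0 < ρ) (deg : ℕ)
    (g : EuclideanSpace ℝ (Fin M) → ℝ)
    (hgconv : ConvexOn ℝ Set.univ g) (hgdiff : Differentiable ℝ g)
    (c α a b : EuclideanSpace ℝ (Fin M)) (hab : ∀ i, a i ≤ b i)
    (K : ℝ)
    (hLip : ∀ x y : EuclideanSpace ℝ (Fin M),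
      (∀ i, a i ≤ x i ∧ x i ≤ b i) → (∀ i, a i ≤ y i ∧ y i ≤ b i) →
      |(g x + ρ * deg * ⟪x, x⟫ - ⟪c, x⟫) - (g y + ρ * deg * ⟪y, y⟫ - ⟪c, y⟫)| ≤
        K * ‖x - y‖)
    (xstar : EuclideanSpace ℝ (Fin M))
    (hxstar : ∀ i, a i ≤ xstar i ∧ xstar i ≤ b i)
    (hmin : ∀ y : EuclideanSpace ℝ (Fin M), (∀ i, a i ≤ y i ∧ y i ≤ b i) →
      (g xstar + ρ * deg * ⟪xstar, xstar⟫ - ⟪c, xstar⟫) + ⟪α, xstar⟫ ≤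
        (g y + ρ * deg * ⟪y, y⟫ - ⟪c, y⟫) + ⟪α, y⟫)
    (l : Fin M) :
    (α l > K → xstar l = a l) ∧ (α l < -K → xstar l = b l) :=
  stmt_17_general ρ deg g c α a b hab K hLip xstar hxstar hmin l
end
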